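/- arXiv:2212.11909 — 3 statements merged into one kernel-verified Lean document; each statement's English description precedes it below -/
import Mathlib

section
/- Let T ∈ (0, ∞], let y : [0, T) → [0, ∞) be absolutely continuous on compact subintervals, let G ∈ L¹(0, T) with G(t) ≥ 0, let c₁, c₂ ∈ [0, ∞) and α > 1, and suppose that y′(t) ≤ G(t) + c₁ y(t) + c₂ y(t)^α for almost every t ∈ (0, T). Set M := 2·max{1, c₁, c₂}. Then there exists η > 0 (depending only on c₁, c₂, α) such that: if y(0) + ∫₀ᵀ G(s) ds + ∫₀ᵀ y(s) ds ≤ η, then y ∈ L^∞(0, T) and y(t) < M·η for all t ∈ [0, T). -/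
/-!
Take `η = 1 / (2M)`, so that `Mη = 1/2`. While `y < 1/2`, the superlinear term is absorbed
into a linear one, `c₂ y^α ≤ c₂ 2^(1-α) y`, and integrating the differential inequality gives
`y(t) ≤ y(0) + ∫ G + L ∫ y ≤ max 1 L · η` with `L = c₁ + c₂ 2^(1-α) < M`. At the first time `y`
reached `1/2` this bound would give `y < Mη = 1/2`, so `y` never reaches it.
-/

open MeasureTheory Set Filter ENNReal

theorem ContinuousOn.forall_lt_of_lt_at_first_hit {α β : Type*}
    [ConditionallyCompleteLinearOrder α] [TopologicalSpace α] [OrderTopology α]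
    [LinearOrder β] [TopologicalSpace β] [OrderClosedTopology β]
    {f : α → β} {a b : α} {K : β} (hf : ContinuousOn f (Icc a b)) (ha : f a < K)
    (hstep : ∀ c ∈ Ioc a b, (∀ t ∈ Ico a c, f t < K) → f c < K) :
    ∀ t ∈ Icc a b, f t < K := by
  by_contra! ⟨t, ht, hKt⟩
  set S := Icc a b ∩ f ⁻¹' Ici K
  have hS : IsCompact S :=
    isCompact_Icc.of_isClosed_subset (hf.preimage_isClosed_of_isClosed isClosed_Icc isClosed_Ici)
      inter_subset_left
  obtain ⟨⟨hac, hcb⟩, hKc⟩ : sInf S ∈ S := hS.sInf_mem ⟨t, ht, hKt⟩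
  have hac' : a < sInf S := hac.lt_of_ne (by rintro h; rw [← h] at hKc; exact hKc.not_gt ha)
  refine (hstep _ ⟨hac', hcb⟩ fun s hs => ?_).not_ge hKc
  by_contra! hKs
  exact (csInf_le hS.bddBelow ⟨⟨hs.1, hs.2.le.trans hcb⟩, hKs⟩).not_gt hs.2

theorem continuousOn_of_eq_add_intervalIntegral {y y' : ℝ → ℝ} {a b : ℝ} (hab : a ≤ b)
    (hy' : IntervalIntegrable y' volume a b)
    (hy : ∀ t ∈ Icc a b, y t = y a + ∫ s in a..t, y' s) : ContinuousOn y (Icc a b) := by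
  have hprim := intervalIntegral.continuousOn_primitive_interval' hy' left_mem_uIcc
  rw [uIcc_of_le hab] at hprim
  exact (continuousOn_const.add hprim).congr hy

theorem le_add_setIntegral_of_ae_deriv_le {y y' G : ℝ → ℝ} {a b L : ℝ} (hab : a ≤ b)
    (hy : y b = y a + ∫ t in a..b, y' t) (hy' : IntervalIntegrable y' volume a b)
    (hG : IntegrableOn G (Ioc a b)) (hyi : IntegrableOn y (Ioc a b))
    (hle : ∀ᵐ t, t ∈ Ioo a b → y' t ≤ G t + L * y t) :
    y b ≤ y a + (∫ t in Ioc a b, G t) + L * ∫ t in Ioc a b, y t := by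
  have hle' : ∀ᵐ t ∂volume.restrict (Ioc a b), y' t ≤ G t + L * y t := by
    rw [← restrict_Ioo_eq_restrict_Ioc]
    exact (ae_restrict_iff' measurableSet_Ioo).2 hle
  have hint := integral_mono_ae (g := fun t => G t + L * y t) hy'.1 (hG.add (hyi.const_mul L)) hle'
  rw [integral_add hG (hyi.const_mul L), integral_const_mul] at hint
  rw [hy, intervalIntegral.integral_of_le hab]
  linarith

theorem Real.rpow_le_rpow_sub_one_mul {x s α : ℝ} (hx : 0 ≤ x) (hxs : x ≤ s) (hα : 1 ≤ α) :
    x ^ α ≤ s ^ (α - 1) * x := by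
  rcases hx.eq_or_lt with rfl | hx
  · simp [Real.zero_rpow (by linarith : α ≠ 0)]
  calc x ^ α = x ^ (α - 1) * x := by rw [← Real.rpow_add_one hx.ne', sub_add_cancel]
    _ ≤ s ^ (α - 1) * x := by gcongr

theorem mul_add_mul_rpow_le {c₁ c₂ x s α : ℝ} (hc₂ : 0 ≤ c₂) (hx : 0 ≤ x) (hxs : x ≤ s)
    (hα : 1 ≤ α) : c₁ * x + c₂ * x ^ α ≤ (c₁ + c₂ * s ^ (α - 1)) * x := by
  have := mul_le_mul_of_nonneg_left (Real.rpow_le_rpow_sub_one_mul hx hxs hα) hc₂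
  linarith

theorem add_mul_le_max_one_mul {a u L η : ℝ} (ha : 0 ≤ a) (hu : 0 ≤ u) (h : a + u ≤ η) :
    a + L * u ≤ max 1 L * η := by
  have h1 : 1 ≤ max 1 L := le_max_left _ _
  have hL : L ≤ max 1 L := le_max_right _ _
  nlinarith [mul_le_mul_of_nonneg_right hL hu]

theorem max_one_add_mul_lt {c₁ c₂ r : ℝ} (hr₀ : 0 ≤ r) (hr₁ : r < 1) :
    max 1 (c₁ + c₂ * r) < 2 * max 1 (max c₁ c₂) := by
  have h1 : 1 ≤ max 1 (max c₁ c₂) := le_max_left _ _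
  have hc₁ : c₁ ≤ max 1 (max c₁ c₂) := (le_max_left _ _).trans (le_max_right _ _)
  have hc₂ : c₂ ≤ max 1 (max c₁ c₂) := (le_max_right _ _).trans (le_max_right _ _)
  refine max_lt (by linarith) ?_
  nlinarith [mul_le_mul_of_nonneg_right hc₂ hr₀]

section AprioriBound

variable {y y' G : ℝ → ℝ} {D : Set ℝ}

theorem le_max_one_mul_of_ae_deriv_le (hD : MeasurableSet D) (hG : IntegrableOn G D)
    (hyD : IntegrableOn y D) (hG_nonneg : ∀ t ∈ D, 0 ≤ G t) (hy_nonneg : ∀ t ∈ D, 0 ≤ y t)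
    (hy0_nonneg : 0 ≤ y 0) {c L η : ℝ} (hc : 0 ≤ c) (hcD : Ioc 0 c ⊆ D) (hL : 0 ≤ L)
    (hy : y c = y 0 + ∫ t in (0 : ℝ)..c, y' t) (hy' : IntervalIntegrable y' volume 0 c)
    (hle : ∀ᵐ t, t ∈ Ioo 0 c → y' t ≤ G t + L * y t)
    (hsmall : y 0 + (∫ t in D, G t) + ∫ t in D, y t ≤ η) :
    y c ≤ max 1 L * η := by
  have hG_nonneg' : 0 ≤ᵐ[volume.restrict D] G := (ae_restrict_iff' hD).2 (ae_of_all _ hG_nonneg)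
  have hy_nonneg' : 0 ≤ᵐ[volume.restrict D] y := (ae_restrict_iff' hD).2 (ae_of_all _ hy_nonneg)
  calc y c ≤ y 0 + (∫ t in Ioc 0 c, G t) + L * ∫ t in Ioc 0 c, y t :=
        le_add_setIntegral_of_ae_deriv_le hc hy hy' (hG.mono_set hcD) (hyD.mono_set hcD) hle
    _ ≤ y 0 + (∫ t in D, G t) + L * ∫ t in D, y t := by
        gcongr y 0 + ?_ + L * ?_
        · exact setIntegral_mono_set hG hG_nonneg' hcD.eventuallyLE
        · exact setIntegral_mono_set hyD hy_nonneg' hcD.eventuallyLE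
    _ ≤ max 1 L * η :=
        add_mul_le_max_one_mul (add_nonneg hy0_nonneg (integral_nonneg_of_ae hG_nonneg'))
          (integral_nonneg_of_ae hy_nonneg') hsmall

theorem forall_lt_of_ae_deriv_le_add_rpow (hD : MeasurableSet D) (hG : IntegrableOn G D)
    (hyD : IntegrableOn y D) (hG_nonneg : ∀ t ∈ D, 0 ≤ G t) (hy_nonneg : ∀ t ∈ D, 0 ≤ y t)
    (hy0_nonneg : 0 ≤ y 0) {b c₁ c₂ α η K : ℝ} (hb : 0 ≤ b) (hbD : Ioc 0 b ⊆ D)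
    (hc₁ : 0 ≤ c₁) (hc₂ : 0 ≤ c₂) (hα : 1 ≤ α)
    (hy : ∀ t ∈ Icc 0 b, y t = y 0 + ∫ s in (0 : ℝ)..t, y' s)
    (hy' : IntervalIntegrable y' volume 0 b)
    (hderiv : ∀ᵐ t, t ∈ Ioo 0 b → y' t ≤ G t + c₁ * y t + c₂ * y t ^ α)
    (hsmall : y 0 + (∫ t in D, G t) + ∫ t in D, y t ≤ η)
    (hK : max 1 (c₁ + c₂ * K ^ (α - 1)) * η < K) :
    ∀ t ∈ Icc 0 b, y t < K := by
  have hy0 : y 0 < K := by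
    have := setIntegral_nonneg (μ := volume) hD hG_nonneg
    have := setIntegral_nonneg (μ := volume) hD hy_nonneg
    have := le_max_left 1 (c₁ + c₂ * K ^ (α - 1))
    nlinarith
  have hK₀ : 0 ≤ K := (hy0_nonneg.trans_lt hy0).le
  have hcont : ContinuousOn y (Icc 0 b) := continuousOn_of_eq_add_intervalIntegral hb hy' hy
  refine hcont.forall_lt_of_lt_at_first_hit hy0 fun c hc hbefore => ?_
  have hle : ∀ᵐ t, t ∈ Ioo 0 c → y' t ≤ G t + (c₁ + c₂ * K ^ (α - 1)) * y t := by
    filter_upwards [hderiv] with t ht htc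
    have := mul_add_mul_rpow_le (c₁ := c₁) hc₂ (hy_nonneg t (hbD ⟨htc.1, htc.2.le.trans hc.2⟩))
      (hbefore t ⟨htc.1.le, htc.2⟩).le hα
    linarith [ht ⟨htc.1, htc.2.trans_le hc.2⟩]
  calc y c ≤ max 1 (c₁ + c₂ * K ^ (α - 1)) * η :=
        le_max_one_mul_of_ae_deriv_le hD hG hyD hG_nonneg hy_nonneg hy0_nonneg hc.1.le
          ((Ioc_subset_Ioc_right hc.2).trans hbD) (by positivity)
          (hy c ⟨hc.1.le, hc.2⟩)
          (hy'.mono_set (uIcc_subset_uIcc_left (by simp [uIcc_of_le hb, hc.1.le, hc.2]))) hle hsmall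
    _ < K := hK

end AprioriBound

theorem gronwall_bound (c₁ c₂ : ℝ) (hc₁ : 0 ≤ c₁) (hc₂ : 0 ≤ c₂)
    (α : ℝ) (hα : 1 < α) :
    ∃ η > (0 : ℝ), ∀ (T : ℝ≥0∞), 0 < T → ∀ (y y' G : ℝ → ℝ),
      -- y takes values in [0,∞) on [0,T)
      (∀ t : ℝ, 0 ≤ t → ENNReal.ofReal t < T → 0 ≤ y t) →
      -- y is absolutely continuous on compact subintervals of [0,T),
      -- with a.e. derivative y'
      (∀ a b : ℝ, 0 ≤ a → a ≤ b → ENNReal.ofReal b < T →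
        IntervalIntegrable y' volume a b ∧ y b = y a + ∫ t in a..b, y' t) →
      -- G ≥ 0 and G ∈ L¹(0,T)
      (∀ t : ℝ, 0 ≤ G t) →
      IntegrableOn G {t : ℝ | 0 < t ∧ ENNReal.ofReal t < T} volume →
      -- y ∈ L¹(0,T)
      IntegrableOn y {t : ℝ | 0 < t ∧ ENNReal.ofReal t < T} volume →
      -- the differential inequality, a.e. on (0,T)
      (∀ᵐ t ∂volume, 0 < t → ENNReal.ofReal t < T →
        y' t ≤ G t + c₁ * y t + c₂ * y t ^ α) →
      -- smallness of the data
      y 0 + (∫ s in {t : ℝ | 0 < t ∧ ENNReal.ofReal t < T}, G s) +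
          (∫ s in {t : ℝ | 0 < t ∧ ENNReal.ofReal t < T}, y s) ≤ η →
      -- conclusion: y ∈ L^∞(0,T) and y(t) < M·η on [0,T), M := 2 max{1,c₁,c₂}
      MemLp y ⊤ (volume.restrict {t : ℝ | 0 < t ∧ ENNReal.ofReal t < T}) ∧
        ∀ t : ℝ, 0 ≤ t → ENNReal.ofReal t < T →
          y t < (2 * max 1 (max c₁ c₂)) * η := by
  set M := 2 * max 1 (max c₁ c₂)
  have hM : 0 < M := by positivity
  have hMη : M * (2 * M)⁻¹ = 1 / 2 := by field_simp
  have hK : max 1 (c₁ + c₂ * (1 / 2) ^ (α - 1)) * (2 * M)⁻¹ < 1 / 2 :=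
    (mul_lt_mul_of_pos_right (max_one_add_mul_lt (by positivity)
      (Real.rpow_lt_one (by norm_num) (by norm_num) (by linarith))) (by positivity)).trans_eq hMη
  refine ⟨(2 * M)⁻¹, by positivity, fun T _ y y' G hy hAC hG_nonneg hG hyD hderiv hsmall => ?_⟩
  set D := {t : ℝ | 0 < t ∧ ENNReal.ofReal t < T}
  have hD : MeasurableSet D := measurableSet_Ioi.inter (measurable_ofReal measurableSet_Iio)
  have hy_nonneg : ∀ t ∈ D, 0 ≤ y t := fun t ht => hy t ht.1.le ht.2
  have hbound (b : ℝ) (hb : 0 ≤ b) (hbT : ENNReal.ofReal b < T) : y b < 1 / 2 := by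
    have hlt (t : ℝ) (htb : t ≤ b) : ENNReal.ofReal t < T := (ofReal_le_ofReal htb).trans_lt hbT
    refine forall_lt_of_ae_deriv_le_add_rpow hD hG hyD (fun t _ => hG_nonneg t) hy_nonneg
      (hy 0 le_rfl (hlt 0 hb)) hb (fun t ht => ⟨ht.1, hlt t ht.2⟩) hc₁ hc₂ hα.le
      (fun t ht => (hAC 0 t le_rfl ht.1 (hlt t ht.2)).2) (hAC 0 b le_rfl hb hbT).1 ?_ hsmall hK
      b ⟨hb, le_rfl⟩
    filter_upwards [hderiv] with t ht htb using ht htb.1 (hlt t htb.2.le)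
  refine ⟨memLp_top_of_bound hyD.aestronglyMeasurable (1 / 2) ?_,
    fun t ht htT => hMη ▸ hbound t ht htT⟩
  refine (ae_restrict_iff' hD).2 (ae_of_all _ fun t ht => ?_)
  rw [Real.norm_of_nonneg (hy_nonneg t ht)]
  exact (hbound t ht.1.le ht.2).le
end

section
/- Let y : [0, ∞) → [0, ∞) be absolutely continuous on compact subintervals, let G ∈ L¹(0, ∞) with G(t) ≥ 0, let c₁, c₂ ∈ [0, ∞) and α > 1, and suppose y′(t) ≤ G(t) + c₁ y(t) + c₂ y(t)^α for almost every t ∈ (0, ∞). Set M := 2·max{1, c₁, c₂}. Then there exists η > 0 (depending only on c₁, c₂, α) such that: if y(0) + ∫₀^∞ G(s) ds + ∫₀^∞ y(s) ds ≤ η, then lim_{t→∞} y(t) = 0. -/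
/-!
On the region `y ≤ 1` the superlinear term is dominated by the linear one, since `y ^ α ≤ y`
there, so `y' ≤ g := G + (c₁ + c₂) y`, an integrable majorant; hence
`y t ≤ y a + ∫_{(a,∞)} g` for `a ≤ t` as long as `y` stays below `1` on `(a, t)`.
With `a = 0` and small data this keeps `y ≤ 1/2`, and a continuity argument shows that `y`
never reaches `1`. Then `y t ≤ y a + ∫_{(a,∞)} g` for all `0 ≤ a ≤ t`: the tail integral is
small for large `a`, and since `y ∈ L¹` there are arbitrarily large `a` with `y a` small.
-/

open MeasureTheory Set Filter
open scoped Topology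

theorem ContinuousOn.forall_Icc_le_of_bootstrap {f : ℝ → ℝ} {a b B B' : ℝ} (hB : B' < B)
    (hf : ContinuousOn f (Icc a b)) (h : ∀ t ∈ Icc a b, (∀ s ∈ Ico a t, f s ≤ B) → f t ≤ B') :
    ∀ t ∈ Icc a b, f t ≤ B' := by
  suffices hlt : ∀ t ∈ Icc a b, f t < B from
    fun t ht => h t ht fun s hs => (hlt s ⟨hs.1, hs.2.le.trans ht.2⟩).le
  by_contra! hex
  set K := Icc a b ∩ f ⁻¹' Ici B
  have hK : IsCompact K :=
    isCompact_Icc.of_isClosed_subset (hf.preimage_isClosed_of_isClosed isClosed_Icc isClosed_Ici)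
      inter_subset_left
  obtain ⟨t, ⟨htab, hBt⟩, ht_least⟩ := hK.exists_isLeast hex
  have hbelow : ∀ s ∈ Ico a t, f s ≤ B := fun s hs => by
    by_contra! hs'
    exact (ht_least ⟨⟨hs.1, hs.2.le.trans htab.2⟩, hs'.le⟩).not_gt hs.2
  exact (h t htab hbelow).not_gt (hB.trans_le hBt)

theorem continuousOn_Icc_of_eq_add_integral {y y' : ℝ → ℝ} {a b : ℝ} (hab : a ≤ b)
    (hy' : IntervalIntegrable y' volume a b) (h : ∀ t ∈ Icc a b, y t = y a + ∫ s in a..t, y' s) :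
    ContinuousOn y (Icc a b) := by
  have hprim := intervalIntegral.continuousOn_primitive_interval' hy' left_mem_uIcc
  rw [uIcc_of_le hab] at hprim
  exact (continuousOn_const.add hprim).congr h

theorem le_add_setIntegral_Ioi_of_ae_le {y y' g : ℝ → ℝ} {a b : ℝ} (hab : a ≤ b)
    (hy' : IntervalIntegrable y' volume a b) (hy : y b = y a + ∫ t in a..b, y' t)
    (hg : IntegrableOn g (Ioi a)) (hg_nonneg : ∀ t ∈ Ioi a, 0 ≤ g t)
    (hle : ∀ᵐ t, t ∈ Ioo a b → y' t ≤ g t) :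
    y b ≤ y a + ∫ t in Ioi a, g t := by
  have hle_Icc : y' ≤ᵐ[volume.restrict (Icc a b)] g := by
    rw [← Measure.restrict_congr_set Ioo_ae_eq_Icc]
    exact (ae_restrict_iff' measurableSet_Ioo).2 hle
  have hg_ab : IntervalIntegrable g volume a b :=
    (intervalIntegrable_iff_integrableOn_Ioc_of_le hab).2 (hg.mono_set Ioc_subset_Ioi_self)
  have hg_Ioi_nonneg : 0 ≤ᵐ[volume.restrict (Ioi a)] g :=
    (ae_restrict_iff' measurableSet_Ioi).2 (.of_forall hg_nonneg)
  calc y b ≤ y a + ∫ t in a..b, g t := by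
        rw [hy]
        gcongr
        exact intervalIntegral.integral_mono_ae_restrict hab hy' hg_ab hle_Icc
    _ ≤ y a + ∫ t in Ioi a, g t := by
        rw [intervalIntegral.integral_of_le hab]
        gcongr
        exact Ioc_subset_Ioi_self

theorem MeasureTheory.IntegrableOn.frequently_atTop_lt {f : ℝ → ℝ} {a ε : ℝ}
    (hf : IntegrableOn f (Ioi a)) (hε : 0 < ε) : ∃ᶠ t in atTop, f t < ε := by
  rw [frequently_atTop]
  intro T
  by_contra! hge
  have hconst : IntegrableOn (fun _ => ε) (Ioi (max a T)) := by
    refine Integrable.mono' (hf.mono_set (Ioi_subset_Ioi (le_max_left a T)))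
      aestronglyMeasurable_const ((ae_restrict_iff' measurableSet_Ioi).2 (.of_forall ?_))
    intro t ht
    rw [Real.norm_of_nonneg hε.le]
    exact hge t ((le_max_right a T).trans ht.le)
  simp [hε.ne'] at hconst

theorem tendsto_zero_of_le_add_integral_Ioi {y g : ℝ → ℝ} (hy : IntegrableOn y (Ioi 0))
    (hy_nonneg : ∀ t, 0 ≤ t → 0 ≤ y t)
    (h : ∀ a t, 0 ≤ a → a ≤ t → y t ≤ y a + ∫ s in Ioi a, g s) :
    Tendsto y atTop (𝓝 0) := by
  refine tendsto_order.2 ⟨fun ε hε => ?_, fun ε hε => ?_⟩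
  · filter_upwards [eventually_ge_atTop 0] with t ht using hε.trans_le (hy_nonneg t ht)
  have htail : ∀ᶠ a in atTop, 0 ≤ a ∧ ∫ s in Ioi a, g s < ε / 2 :=
    (eventually_ge_atTop 0).and ((tendsto_integral_Ioi_zero tendsto_id).eventually_lt_const
      (half_pos hε))
  obtain ⟨a, hya, ha, hga⟩ := ((hy.frequently_atTop_lt (half_pos hε)).and_eventually htail).exists
  filter_upwards [eventually_ge_atTop a] with t hat
  linarith [h a t ha hat]

theorem mul_add_mul_rpow_le_add_mul {c₁ c₂ α x : ℝ} (hc₂ : 0 ≤ c₂) (hα : 1 ≤ α) (hx : 0 ≤ x)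
    (hx₁ : x ≤ 1) : c₁ * x + c₂ * x ^ α ≤ (c₁ + c₂) * x := by
  nlinarith [mul_le_mul_of_nonneg_left (Real.rpow_le_self_of_le_one hx hx₁ hα) hc₂]

theorem le_add_integral_Ioi_of_deriv_le_rpow {c₁ c₂ α a b : ℝ} {y y' G : ℝ → ℝ} (hc₁ : 0 ≤ c₁)
    (hc₂ : 0 ≤ c₂) (hα : 1 ≤ α) (ha : 0 ≤ a) (hab : a ≤ b) (hy_nonneg : ∀ t, 0 ≤ t → 0 ≤ y t)
    (hG_nonneg : ∀ t, 0 ≤ G t) (hg : IntegrableOn (fun t => G t + (c₁ + c₂) * y t) (Ioi a))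
    (hy' : IntervalIntegrable y' volume a b) (hy : y b = y a + ∫ t in a..b, y' t)
    (hode : ∀ᵐ t, 0 < t → y' t ≤ G t + c₁ * y t + c₂ * y t ^ α) (hle : ∀ t ∈ Ioo a b, y t ≤ 1) :
    y b ≤ y a + ∫ t in Ioi a, (G t + (c₁ + c₂) * y t) := by
  refine le_add_setIntegral_Ioi_of_ae_le hab hy' hy hg (fun t ht => ?_) ?_
  · have := hy_nonneg t (ha.trans ht.le)
    have := hG_nonneg t
    positivity
  filter_upwards [hode] with t ht htab
  have ht₀ : 0 < t := ha.trans_lt htab.1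
  linarith [ht ht₀, mul_add_mul_rpow_le_add_mul (c₁ := c₁) hc₂ hα (hy_nonneg t ht₀.le) (hle t htab)]

theorem gronwall_decay (c₁ c₂ : ℝ) (hc₁ : 0 ≤ c₁) (hc₂ : 0 ≤ c₂)
    (α : ℝ) (hα : 1 < α) :
    ∃ η > (0 : ℝ), ∀ (y y' G : ℝ → ℝ),
      -- y takes values in [0,∞)
      (∀ t : ℝ, 0 ≤ t → 0 ≤ y t) →
      -- y is absolutely continuous on compact subintervals of [0,∞),
      -- with a.e. derivative y'
      (∀ a b : ℝ, 0 ≤ a → a ≤ b →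
        IntervalIntegrable y' volume a b ∧ y b = y a + ∫ t in a..b, y' t) →
      -- G ≥ 0 and G ∈ L¹(0,∞)
      (∀ t : ℝ, 0 ≤ G t) →
      IntegrableOn G (Ioi (0 : ℝ)) volume →
      -- y ∈ L¹(0,∞)
      IntegrableOn y (Ioi (0 : ℝ)) volume →
      -- the differential inequality, a.e. on (0,∞)
      (∀ᵐ t ∂volume, 0 < t → y' t ≤ G t + c₁ * y t + c₂ * y t ^ α) →
      -- smallness of the data
      y 0 + (∫ s in Ioi (0 : ℝ), G s) + (∫ s in Ioi (0 : ℝ), y s) ≤ η →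
      -- conclusion: y(t) → 0 as t → ∞
      Tendsto y atTop (nhds 0) := by
  refine ⟨1 / (2 * (1 + c₁ + c₂)), by positivity, ?_⟩
  intro y y' G hy_nonneg hftc hG_nonneg hG hy hode hsmall
  have hg : IntegrableOn (fun t => G t + (c₁ + c₂) * y t) (Ioi 0) := hG.add (hy.const_mul _)
  have hstep : ∀ a b, 0 ≤ a → a ≤ b → (∀ t ∈ Ioo a b, y t ≤ 1) →
      y b ≤ y a + ∫ t in Ioi a, (G t + (c₁ + c₂) * y t) := fun a b ha hab =>
    le_add_integral_Ioi_of_deriv_le_rpow hc₁ hc₂ hα.le ha hab hy_nonneg hG_nonneg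
      (hg.mono_set (Ioi_subset_Ioi ha)) (hftc a b ha hab).1 (hftc a b ha hab).2 hode
  have hdata : y 0 + ∫ t in Ioi 0, (G t + (c₁ + c₂) * y t) ≤ 1 / 2 := by
    have hIG : 0 ≤ ∫ t in Ioi (0 : ℝ), G t :=
      setIntegral_nonneg measurableSet_Ioi fun t _ => hG_nonneg t
    have hIy : 0 ≤ ∫ t in Ioi (0 : ℝ), y t :=
      setIntegral_nonneg measurableSet_Ioi fun t ht => hy_nonneg t ht.le
    rw [integral_add hG (hy.const_mul _), integral_const_mul]
    calc _ ≤ (1 + c₁ + c₂) * (y 0 + (∫ s in Ioi (0 : ℝ), G s) + ∫ s in Ioi (0 : ℝ), y s) := by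
          nlinarith [hy_nonneg 0 le_rfl]
      _ ≤ (1 + c₁ + c₂) * (1 / (2 * (1 + c₁ + c₂))) := by gcongr
      _ = 1 / 2 := by field_simp
  have hbound : ∀ t, 0 ≤ t → y t ≤ 1 / 2 := fun t ht =>
    (continuousOn_Icc_of_eq_add_integral ht (hftc 0 t le_rfl ht).1
        fun s hs => (hftc 0 s le_rfl hs.1).2).forall_Icc_le_of_bootstrap one_half_lt_one
      (fun b hb hb₁ => (hstep 0 b le_rfl hb.1 fun s hs => hb₁ s ⟨hs.1.le, hs.2⟩).trans hdata)
      t ⟨ht, le_rfl⟩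
  exact tendsto_zero_of_le_add_integral_Ioi hy hy_nonneg fun a t ha hat =>
    hstep a t ha hat fun s hs => (hbound s (ha.trans hs.1.le)).trans (by norm_num)
end

section
/- Let y : [0, ∞) → [0, ∞) be absolutely continuous on compact subintervals, let G ∈ L¹(0, ∞) with G(t) ≥ 0 and with t ↦ t·G(t) also in L¹(0, ∞), let c₂ ∈ [0, ∞) and α ≥ 2, and suppose y′(t) ≤ G(t) + c₂ y(t)^α for almost every t ∈ (0, ∞). Set M := 2·max{1, c₂}. Then there exists η > 0 (depending only on c₂, α) such that: if y(0) + ∫₀^∞ G(s) ds + ∫₀^∞ y(s) ds ≤ η, then sup_{t ∈ (0, ∞)} t·y(t) < ∞, i.e. y(t) = O(t⁻¹) as t → ∞. -/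
/-!
Absolute continuity turns the differential inequality into `y b ≤ y a + ∫ₐᵇ (G + c₂ y^α)`.
If the data are small, a first-exit argument keeps `y < 1`, so that `y^α ≤ y²`.
To bound `T y(T)`, start the integral inequality at a minimum point `s₀` of `y` on `[T/2, T]`:
then `T y(s₀) ≤ 2 ∫ y`, and `T ≤ 2s` on `[s₀, T]` gives `T ∫ G ≤ 2 ∫ s G(s)` and
`T ∫ y^α ≤ 2 sup_{s<T} (s y(s)) ∫ y`. The last term is a small multiple of the running supremum
of `t y(t)`, so a second first-exit argument bounds `t y(t)`.
-/

open MeasureTheory Set Filter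

lemma rpow_le_sq_of_le_one {u α : ℝ} (hu₀ : 0 ≤ u) (hu₁ : u ≤ 1) (hα : 2 ≤ α) :
    u ^ α ≤ u ^ 2 := by
  simpa using Real.rpow_le_rpow_of_exponent_ge' hu₀ hu₁ zero_le_two hα

lemma setIntegral_mono_set_of_nonneg {X : Type*} [MeasurableSpace X] {μ : Measure X}
    {f : X → ℝ} {s t : Set X} (ht : MeasurableSet t) (hf : IntegrableOn f t μ)
    (hf₀ : ∀ x ∈ t, 0 ≤ f x) (hst : s ⊆ t) :
    ∫ x in s, f x ∂μ ≤ ∫ x in t, f x ∂μ :=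
  setIntegral_mono_set hf (ae_restrict_of_forall_mem ht hf₀) hst.eventuallyLE

lemma forall_lt_of_forall_Ico_le_imp_lt {f : ℝ → ℝ} {a K : ℝ} (hf : ContinuousOn f (Ici a))
    (h : ∀ T, a ≤ T → (∀ s ∈ Ico a T, f s ≤ K) → f T < K) : ∀ t, a ≤ t → f t < K := by
  by_contra! hexit
  obtain ⟨t₀, ht₀, hK⟩ := hexit
  set C := Ici a ∩ f ⁻¹' Ici K
  have hC : IsClosed C := hf.preimage_isClosed_of_isClosed isClosed_Ici isClosed_Ici
  have hbdd : BddBelow C := ⟨a, fun _ hs => hs.1⟩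
  have hfirst : sInf C ∈ C := hC.csInf_mem ⟨t₀, ht₀, hK⟩ hbdd
  refine (h (sInf C) hfirst.1 fun s hs => ?_).not_ge hfirst.2
  by_contra! hs'
  exact (csInf_le hbdd ⟨hs.1, hs'.le⟩).not_gt hs.2

lemma continuousOn_Ici_of_eq_add_intervalIntegral {y y' : ℝ → ℝ} {a : ℝ}
    (h : ∀ b, a ≤ b → IntervalIntegrable y' volume a b ∧ y b = y a + ∫ t in a..b, y' t) :
    ContinuousOn y (Ici a) := by
  intro t ht
  have hb : a ≤ t + 1 := by linarith [mem_Ici.mp ht]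
  have hprim : ContinuousOn (fun b => y a + ∫ s in a..b, y' s) (Icc a (t + 1)) := by
    have := intervalIntegral.continuousOn_primitive_interval' (h (t + 1) hb).1 left_mem_uIcc
    rw [uIcc_of_le hb] at this
    exact continuousOn_const.add this
  have hy : ContinuousOn y (Icc a (t + 1)) := hprim.congr fun s hs => (h s hs.1).2
  refine (hy t ⟨ht, by linarith⟩).mono_of_mem_nhdsWithin ?_
  rw [← Ici_inter_Iic]
  exact inter_mem_nhdsWithin _ (Iic_mem_nhds (by linarith))

lemma le_add_setIntegral_of_ae_le {y y' g : ℝ → ℝ} {a b : ℝ} (hab : a ≤ b)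
    (hy' : IntervalIntegrable y' volume a b) (hy : y b = y a + ∫ t in a..b, y' t)
    (hg : IntegrableOn g (Ioo a b)) (hle : ∀ᵐ t, t ∈ Ioo a b → y' t ≤ g t) :
    y b ≤ y a + ∫ t in Ioo a b, g t := by
  rw [hy, intervalIntegral.integral_of_le hab, integral_Ioc_eq_integral_Ioo]
  exact add_le_add le_rfl
    (setIntegral_mono_on_ae (hy'.1.mono_set Ioo_subset_Ioc_self) hg measurableSet_Ioo hle)

lemma mul_le_two_setIntegral_of_isMinOn {y : ℝ → ℝ} {T s₀ : ℝ} (hT : 0 < T)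
    (hy : IntegrableOn y (Ioi 0)) (hy₀ : ∀ t ∈ Ioi (0 : ℝ), 0 ≤ y t)
    (hmin : IsMinOn y (Icc (T / 2) T) s₀) : T * y s₀ ≤ 2 * ∫ t in Ioi 0, y t := by
  have hsub : Ioo (T / 2) T ⊆ Ioi 0 := fun t ht => (half_pos hT).trans ht.1
  have havg := setIntegral_ge_of_const_le_real measurableSet_Ioo measure_Ioo_lt_top.ne
    (fun t ht => hmin ⟨ht.1.le, ht.2.le⟩) (hy.mono_set hsub)
  rw [Real.volume_real_Ioo_of_le (half_le_self hT.le)] at havg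
  linarith [setIntegral_mono_set_of_nonneg measurableSet_Ioi hy hy₀ hsub]

lemma mul_setIntegral_Ioo_le_two_mul_setIntegral_mul {G : ℝ → ℝ} {s T : ℝ} (hs : 0 ≤ s)
    (hTs : T ≤ 2 * s) (hG₀ : ∀ t, 0 ≤ G t) (htG : IntegrableOn (fun t => t * G t) (Ioi 0)) :
    T * ∫ t in Ioo s T, G t ≤ 2 * ∫ t in Ioi 0, t * G t := by
  have hsub : Ioo s T ⊆ Ioi 0 := fun t ht => hs.trans_lt ht.1
  calc T * ∫ t in Ioo s T, G t = ∫ t in Ioo s T, T * G t := (integral_const_mul _ _).symm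
    _ ≤ ∫ t in Ioo s T, 2 * (t * G t) :=
      integral_mono_of_nonneg
        (ae_restrict_of_forall_mem measurableSet_Ioo fun t ht =>
          mul_nonneg ((hsub ht).le.trans ht.2.le) (hG₀ t))
        ((htG.mono_set hsub).const_mul 2)
        (ae_restrict_of_forall_mem measurableSet_Ioo fun t ht =>
          show T * G t ≤ 2 * (t * G t) by
            rw [← mul_assoc]; exact mul_le_mul_of_nonneg_right (by linarith [ht.1]) (hG₀ t))
    _ = 2 * ∫ t in Ioo s T, t * G t := integral_const_mul _ _
    _ ≤ 2 * ∫ t in Ioi 0, t * G t :=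
      mul_le_mul_of_nonneg_left (setIntegral_mono_set_of_nonneg measurableSet_Ioi htG
        (fun t ht => mul_nonneg (le_of_lt ht) (hG₀ t)) hsub) zero_le_two

structure IsGronwallSubsolution (y G : ℝ → ℝ) (c α : ℝ) : Prop where
  continuousOn : ContinuousOn y (Ici 0)
  nonneg : ∀ t, 0 ≤ t → 0 ≤ y t
  le_add_integral : ∀ a b, 0 ≤ a → a ≤ b →
    y b ≤ y a + (∫ t in Ioo a b, G t) + c * ∫ t in Ioo a b, y t ^ α

lemma isGronwallSubsolution_of_ae_deriv_le {y y' G : ℝ → ℝ} {c α : ℝ} (hα : 0 ≤ α)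
    (hy₀ : ∀ t, 0 ≤ t → 0 ≤ y t)
    (hFTC : ∀ a b, 0 ≤ a → a ≤ b →
      IntervalIntegrable y' volume a b ∧ y b = y a + ∫ t in a..b, y' t)
    (hG : IntegrableOn G (Ioi 0)) (hy' : ∀ᵐ t, 0 < t → y' t ≤ G t + c * y t ^ α) :
    IsGronwallSubsolution y G c α := by
  have hcont := continuousOn_Ici_of_eq_add_intervalIntegral fun b hb => hFTC 0 b le_rfl hb
  refine ⟨hcont, hy₀, fun a b ha hab => ?_⟩
  have hIoo : Ioo a b ⊆ Ioi 0 := fun t ht => ha.trans_lt ht.1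
  have hGab : IntegrableOn G (Ioo a b) := hG.mono_set hIoo
  have hpow : IntegrableOn (fun t => y t ^ α) (Ioo a b) :=
    ((hcont.mono fun t ht => ha.trans ht.1).rpow_const fun _ _ => Or.inr hα).integrableOn_Icc
      |>.mono_set Ioo_subset_Icc_self
  obtain ⟨hint, heq⟩ := hFTC a b ha hab
  rw [add_assoc, ← integral_const_mul, ← integral_add hGab (hpow.const_mul c)]
  exact le_add_setIntegral_of_ae_le hab hint heq (hGab.add (hpow.const_mul c))
    (hy'.mono fun t ht hmem => ht (hIoo hmem))

namespace IsGronwallSubsolution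

variable {y G : ℝ → ℝ} {c α : ℝ}

lemma lt_of_small_data (h : IsGronwallSubsolution y G c α) (hc : 0 ≤ c) (hα : 2 ≤ α)
    (hG₀ : ∀ t, 0 ≤ G t) (hG : IntegrableOn G (Ioi 0)) (hy : IntegrableOn y (Ioi 0))
    {B : ℝ} (hB₀ : 0 ≤ B) (hB₁ : B ≤ 1)
    (hsmall : y 0 + (∫ t in Ioi 0, G t) + c * (B * ∫ t in Ioi 0, y t) < B) :
    ∀ t, 0 ≤ t → y t < B := by
  refine forall_lt_of_forall_Ico_le_imp_lt h.continuousOn fun T hT hyB => ?_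
  have hpt : ∀ t ∈ Ioo 0 T, y t ^ α ≤ B * y t := fun t ht => by
    have hyt := h.nonneg t ht.1.le
    have hytB := hyB t ⟨ht.1.le, ht.2⟩
    calc y t ^ α ≤ y t ^ 2 := rpow_le_sq_of_le_one hyt (hytB.trans hB₁) hα
      _ ≤ B * y t := by rw [sq]; exact mul_le_mul_of_nonneg_right hytB hyt
  have hGT : ∫ t in Ioo 0 T, G t ≤ ∫ t in Ioi 0, G t :=
    setIntegral_mono_set_of_nonneg measurableSet_Ioi hG (fun t _ => hG₀ t) Ioo_subset_Ioi_self
  have hpowT : ∫ t in Ioo 0 T, y t ^ α ≤ B * ∫ t in Ioi 0, y t := calc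
    ∫ t in Ioo 0 T, y t ^ α ≤ ∫ t in Ioo 0 T, B * y t :=
      integral_mono_of_nonneg
        (ae_restrict_of_forall_mem measurableSet_Ioo fun t ht =>
          Real.rpow_nonneg (h.nonneg t ht.1.le) α)
        ((hy.mono_set Ioo_subset_Ioi_self).const_mul B)
        (ae_restrict_of_forall_mem measurableSet_Ioo hpt)
    _ ≤ B * ∫ t in Ioi 0, y t := by
      rw [integral_const_mul]
      exact mul_le_mul_of_nonneg_left (setIntegral_mono_set_of_nonneg measurableSet_Ioi hy
        (fun t ht => h.nonneg t (le_of_lt ht)) Ioo_subset_Ioi_self) hB₀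
  calc y T ≤ y 0 + (∫ t in Ioo 0 T, G t) + c * ∫ t in Ioo 0 T, y t ^ α :=
        h.le_add_integral 0 T le_rfl hT
    _ ≤ y 0 + (∫ t in Ioi 0, G t) + c * (B * ∫ t in Ioi 0, y t) := by gcongr
    _ < B := hsmall

lemma mul_setIntegral_rpow_le (h : IsGronwallSubsolution y G c α) (hα : 2 ≤ α)
    (hy : IntegrableOn y (Ioi 0)) (hy₁ : ∀ t, 0 ≤ t → y t ≤ 1) {s T K : ℝ} (hs : 0 ≤ s)
    (hTs : T ≤ 2 * s) (hK₀ : 0 ≤ K) (hK : ∀ t ∈ Ioo s T, t * y t ≤ K) :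
    T * ∫ t in Ioo s T, y t ^ α ≤ 2 * K * ∫ t in Ioi 0, y t := by
  have hsub : Ioo s T ⊆ Ioi 0 := fun t ht => hs.trans_lt ht.1
  have hy₀ : ∀ t ∈ Ioi (0 : ℝ), 0 ≤ y t := fun t ht => h.nonneg t (le_of_lt ht)
  have hpt : ∀ t ∈ Ioo s T, T * y t ^ α ≤ 2 * K * y t := fun t ht => by
    have hyt := hy₀ t (hsub ht)
    calc T * y t ^ α ≤ T * y t ^ 2 :=
          mul_le_mul_of_nonneg_left (rpow_le_sq_of_le_one hyt (hy₁ t (hsub ht).le) hα)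
            ((hsub ht).le.trans ht.2.le)
      _ ≤ 2 * t * y t ^ 2 := mul_le_mul_of_nonneg_right (by linarith [ht.1]) (sq_nonneg _)
      _ = 2 * (t * y t) * y t := by ring
      _ ≤ 2 * K * y t := by gcongr; exact hK t ht
  calc T * ∫ t in Ioo s T, y t ^ α = ∫ t in Ioo s T, T * y t ^ α := (integral_const_mul _ _).symm
    _ ≤ ∫ t in Ioo s T, 2 * K * y t :=
      integral_mono_of_nonneg
        (ae_restrict_of_forall_mem measurableSet_Ioo fun t ht =>
          mul_nonneg ((hsub ht).le.trans ht.2.le) (Real.rpow_nonneg (hy₀ t (hsub ht)) α))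
        ((hy.mono_set hsub).const_mul _) (ae_restrict_of_forall_mem measurableSet_Ioo hpt)
    _ = 2 * K * ∫ t in Ioo s T, y t := integral_const_mul _ _
    _ ≤ 2 * K * ∫ t in Ioi 0, y t :=
      mul_le_mul_of_nonneg_left (setIntegral_mono_set_of_nonneg measurableSet_Ioi hy hy₀ hsub)
        (by positivity)

lemma mul_le_of_forall_Ico_mul_le (h : IsGronwallSubsolution y G c α) (hc : 0 ≤ c) (hα : 2 ≤ α)
    (hG₀ : ∀ t, 0 ≤ G t) (htG : IntegrableOn (fun t => t * G t) (Ioi 0))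
    (hy : IntegrableOn y (Ioi 0)) (hy₁ : ∀ t, 0 ≤ t → y t ≤ 1) {T K : ℝ} (hT : 0 < T)
    (hK : ∀ s ∈ Ico 0 T, s * y s ≤ K) :
    T * y T ≤ 2 * (∫ t in Ioi 0, y t) + 2 * (∫ t in Ioi 0, t * G t)
      + c * (2 * K * ∫ t in Ioi 0, y t) := by
  have hT₂ : 0 < T / 2 := half_pos hT
  obtain ⟨s₀, ⟨hs₀, hs₀T⟩, hmin⟩ := isCompact_Icc.exists_isMinOn
    (nonempty_Icc.2 (half_le_self hT.le)) (h.continuousOn.mono fun t ht => hT₂.le.trans ht.1)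
  have hs₀' : 0 ≤ s₀ := hT₂.le.trans hs₀
  have hTs₀ : T ≤ 2 * s₀ := by linarith
  have hK₀ : 0 ≤ K := by simpa using hK 0 ⟨le_rfl, hT⟩
  calc T * y T ≤ T * (y s₀ + (∫ t in Ioo s₀ T, G t) + c * ∫ t in Ioo s₀ T, y t ^ α) :=
        mul_le_mul_of_nonneg_left (h.le_add_integral s₀ T hs₀' hs₀T) hT.le
    _ = T * y s₀ + T * (∫ t in Ioo s₀ T, G t) + c * (T * ∫ t in Ioo s₀ T, y t ^ α) := by ring
    _ ≤ _ := by
      gcongr ?_ + ?_ + c * ?_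
      · exact mul_le_two_setIntegral_of_isMinOn hT hy
          (fun t ht => h.nonneg t (le_of_lt ht)) hmin
      · exact mul_setIntegral_Ioo_le_two_mul_setIntegral_mul hs₀' hTs₀ hG₀ htG
      · exact h.mul_setIntegral_rpow_le hα hy hy₁ hs₀' hTs₀ hK₀
          fun t ht => hK t ⟨hs₀'.trans ht.1.le, ht.2⟩

lemma mul_lt_of_small_data (h : IsGronwallSubsolution y G c α) (hc : 0 ≤ c) (hα : 2 ≤ α)
    (hG₀ : ∀ t, 0 ≤ G t) (htG : IntegrableOn (fun t => t * G t) (Ioi 0)) (hy : IntegrableOn y (Ioi 0))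
    (hy₁ : ∀ t, 0 ≤ t → y t ≤ 1) (hsmall : 8 * c * ∫ t in Ioi 0, y t ≤ 1) :
    ∀ t, 0 ≤ t → t * y t < 4 * ((∫ t in Ioi 0, y t) + ∫ t in Ioi 0, t * G t) + 1 := by
  have hIy : 0 ≤ ∫ t in Ioi 0, y t :=
    setIntegral_nonneg measurableSet_Ioi fun t ht => h.nonneg t (le_of_lt ht)
  have hItG : 0 ≤ ∫ t in Ioi 0, t * G t :=
    setIntegral_nonneg measurableSet_Ioi fun t ht => mul_nonneg (le_of_lt ht) (hG₀ t)
  refine forall_lt_of_forall_Ico_le_imp_lt (continuousOn_id.mul h.continuousOn)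
    fun T hT hK => ?_
  rcases hT.eq_or_lt with rfl | hT
  · simp only [zero_mul]; positivity
  · have := h.mul_le_of_forall_Ico_mul_le hc hα hG₀ htG hy hy₁ hT hK
    nlinarith

end IsGronwallSubsolution

theorem gronwall_decay_rate (c₂ : ℝ) (hc₂ : 0 ≤ c₂) (α : ℝ) (hα : 2 ≤ α) :
    ∃ η > (0 : ℝ), ∀ (y y' G : ℝ → ℝ),
      -- y takes values in [0,∞)
      (∀ t : ℝ, 0 ≤ t → 0 ≤ y t) →
      -- y is absolutely continuous on compact subintervals of [0,∞),
      -- with a.e. derivative y'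
      (∀ a b : ℝ, 0 ≤ a → a ≤ b →
        IntervalIntegrable y' volume a b ∧ y b = y a + ∫ t in a..b, y' t) →
      -- G ≥ 0, G ∈ L¹(0,∞) and t·G(t) ∈ L¹(0,∞)
      (∀ t : ℝ, 0 ≤ G t) →
      IntegrableOn G (Ioi (0 : ℝ)) volume →
      IntegrableOn (fun t => t * G t) (Ioi (0 : ℝ)) volume →
      -- y ∈ L¹(0,∞)
      IntegrableOn y (Ioi (0 : ℝ)) volume →
      -- the differential inequality (with c₁ = 0), a.e. on (0,∞)
      (∀ᵐ t ∂volume, 0 < t → y' t ≤ G t + c₂ * y t ^ α) →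
      -- smallness of the data
      y 0 + (∫ s in Ioi (0 : ℝ), G s) + (∫ s in Ioi (0 : ℝ), y s) ≤ η →
      -- conclusion: sup_{t ∈ (0,∞)} t·y(t) < ∞
      ∃ A : ℝ, ∀ t : ℝ, 0 < t → t * y t ≤ A := by
  -- `(1 + c₂) η < 1` keeps `y < 1`, and `8 c₂ η ≤ 1` closes the bound on `t y(t)`
  set η := (8 * (1 + c₂))⁻¹
  have hη : 8 * (1 + c₂) * η = 1 := mul_inv_cancel₀ (by positivity)
  refine ⟨η, by positivity, fun y y' G hy₀ hFTC hG₀ hG htG hy hy' hsmall => ?_⟩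
  have hsol := isGronwallSubsolution_of_ae_deriv_le (by linarith) hy₀ hFTC hG hy'
  have hy0 : 0 ≤ y 0 := hy₀ 0 le_rfl
  have hIG : 0 ≤ ∫ t in Ioi 0, G t := setIntegral_nonneg measurableSet_Ioi fun t _ => hG₀ t
  have hIy : 0 ≤ ∫ t in Ioi 0, y t :=
    setIntegral_nonneg measurableSet_Ioi fun t ht => hy₀ t (le_of_lt ht)
  have hy_lt_one := hsol.lt_of_small_data hc₂ hα hG₀ hG hy zero_le_one le_rfl (by nlinarith)
  refine ⟨_, fun t ht => (hsol.mul_lt_of_small_data hc₂ hα hG₀ htG hy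
    (fun t ht => (hy_lt_one t ht).le) (by nlinarith) t ht.le).le⟩
end
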